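/- arXiv:2410.16865 — 3 statements merged into one kernel-verified Lean document; each statement's English description precedes it below -/
import Mathlib

section
/- Let p : ZMod 4 → ℤ³ be a cyclic sequence of four points such that (i) for every i, the edge vector d i := p(i+1) − p(i) has exactly one nonzero coordinate, and (ii) for every i, the two edge vectors emanating from the vertex p(i), namely p(i+1) − p(i) and p(i−1) − p(i), do not point in the same signed axis direction (equivalently, their dot product is not positive). Then the quadrilateral p(0)p(1)p(2)p(3) is an axis-aligned rectangle: for every i, d(i+2) = −d(i), and the nonzero coordinates of d(i) and d(i+1) lie in distinct positions (equivalently, the dot product of d(i) and d(i+1) is zero). -/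
/-!
Write `d i = p (i + 1) - p i` and fix a coordinate `c`. The face closes up, so the four numbers
`d i c` sum to zero. At a vertex, two edges along the same axis that do not overlap point the
same way, so two consecutive numbers `d i c`, `d (i + 1) c` never have opposite signs. Four such
numbers with zero sum cannot have two consecutive nonzero entries; this makes consecutive edges
orthogonal, and then the zero sum forces `d (i + 2) c = -d i c`.
-/

open Matrix

namespace ZMod

theorem sum_four {M : Type*} [AddCommMonoid M] (x : ZMod 4 → M) (i : ZMod 4) :
    ∑ j, x j = x i + x (i + 1) + x (i + 2) + x (i + 3) := by
  have huniv : (Finset.univ : Finset (ZMod 4)) = {0, 1, 2, 3} := rfl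
  rw [← Equiv.sum_comp (Equiv.addLeft i) x, huniv, Finset.sum_insert (by decide),
    Finset.sum_insert (by decide), Finset.sum_pair (by decide)]
  simp only [Equiv.coe_addLeft, add_zero, add_assoc]

theorem add_three_add_one (i : ZMod 4) : i + 3 + 1 = i := by
  rw [add_assoc]
  exact add_zero i

theorem sum_add_one_sub_eq_zero {n : ℕ} [NeZero n] {G : Type*} [AddCommGroup G]
    (p : ZMod n → G) : ∑ i, (p (i + 1) - p i) = 0 := by
  rw [Finset.sum_sub_distrib, sub_eq_zero]
  exact Equiv.sum_comp (Equiv.addRight 1) p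

variable {R : Type*} {x : ZMod 4 → R}

theorem mul_add_one_eq_zero_of_sum_eq_zero [CommRing R] [LinearOrder R] [IsStrictOrderedRing R]
    (hsign : ∀ i, 0 ≤ x i * x (i + 1)) (hsum : ∑ i, x i = 0) (i : ZMod 4) :
    x i * x (i + 1) = 0 := by
  have h₁₂ : 0 ≤ x (i + 1) * x (i + 2) := by
    simpa only [add_assoc, one_add_one_eq_two] using hsign (i + 1)
  have h₃₀ : 0 ≤ x (i + 3) * x i := by simpa only [add_three_add_one] using hsign (i + 3)
  rw [sum_four x i] at hsum
  refine (hsign i).antisymm' (not_lt.mp fun hpos => ?_)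
  rcases mul_pos_iff.mp hpos with ⟨h₀, h₁⟩ | ⟨h₀, h₁⟩
  · have := nonneg_of_mul_nonneg_right h₁₂ h₁
    have := nonneg_of_mul_nonneg_left h₃₀ h₀
    linarith
  · have := nonpos_of_mul_nonneg_right h₁₂ h₁
    have := nonpos_of_mul_nonneg_left h₃₀ h₀
    linarith

theorem add_two_eq_neg_of_mul_add_one_eq_zero [Ring R] [NoZeroDivisors R]
    (hdisj : ∀ i, x i * x (i + 1) = 0) (hsum : ∑ i, x i = 0) (i : ZMod 4) :
    x (i + 2) = -x i := by
  have h₁₂ : x (i + 1) * x (i + 2) = 0 := by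
    simpa only [add_assoc, one_add_one_eq_two] using hdisj (i + 1)
  have h₂₃ : x (i + 2) * x (i + 3) = 0 := by
    simpa only [add_assoc, (by decide : (2 : ZMod 4) + 1 = 3)] using hdisj (i + 2)
  have h₃₀ : x (i + 3) * x i = 0 := by simpa only [add_three_add_one] using hdisj (i + 3)
  rw [sum_four x i] at hsum
  by_cases hodd : x (i + 1) = 0 ∧ x (i + 3) = 0
  · rw [hodd.1, hodd.2, add_zero, add_zero, add_comm] at hsum
    exact eq_neg_of_add_eq_zero_left hsum
  · have heven : x i = 0 ∧ x (i + 2) = 0 := by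
      rcases not_and_or.mp hodd with h | h
      · exact ⟨(mul_eq_zero.mp (hdisj i)).resolve_right h,
          (mul_eq_zero.mp h₁₂).resolve_left h⟩
      · exact ⟨(mul_eq_zero.mp h₃₀).resolve_left h,
          (mul_eq_zero.mp h₂₃).resolve_right h⟩
    rw [heven.1, heven.2, neg_zero]

end ZMod

section SingleAxis

variable {ι R : Type*} [Fintype ι]

theorem dotProduct_eq_mul_of_forall_ne_eq_zero [NonUnitalNonAssocSemiring R] {v : ι → R} {c : ι}
    (hv : ∀ j ≠ c, v j = 0) (w : ι → R) : v ⬝ᵥ w = v c * w c :=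
  Finset.sum_eq_single c (fun j _ hj => by rw [hv j hj, zero_mul])
    (fun hc => absurd (Finset.mem_univ c) hc)

theorem mul_apply_nonneg_of_dotProduct_nonneg [NonUnitalNonAssocSemiring R] [Preorder R]
    {v w : ι → R} (hv : (Function.support v).Subsingleton) (h : 0 ≤ v ⬝ᵥ w) (c : ι) :
    0 ≤ v c * w c := by
  by_cases hc : v c = 0
  · rw [hc, zero_mul]
  · rwa [← dotProduct_eq_mul_of_forall_ne_eq_zero
      (fun j hj => not_ne_iff.mp fun h => hj (hv h hc)) w]

end SingleAxis

/-- Every face of a polycube is an axis-aligned rectangle: if `p : ZMod 4 → ℤ³`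
is a cyclic quadrilateral whose edge vectors each have exactly one nonzero
coordinate, and the two edge vectors emanating from each vertex do not point in
the same signed axis direction (their dot product is not positive), then
opposite edge vectors are negatives of each other and consecutive edge vectors
are orthogonal. -/
theorem polycube_face_is_axis_aligned_rectangle
    (p : ZMod 4 → (Fin 3 → ℤ))
    (hone : ∀ i : ZMod 4, ∃! j : Fin 3, (p (i + 1) - p i) j ≠ 0)
    (hnot : ∀ i : ZMod 4,
      ¬ 0 < ∑ j : Fin 3, (p (i + 1) - p i) j * (p (i - 1) - p i) j) :
    ∀ i : ZMod 4,
      (p (i + 2 + 1) - p (i + 2)) = -(p (i + 1) - p i) ∧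
      ∑ j : Fin 3, (p (i + 1) - p i) j * (p (i + 1 + 1) - p (i + 1)) j = 0 := by
  set d : ZMod 4 → Fin 3 → ℤ := fun i => p (i + 1) - p i
  have hclosed (c : Fin 3) : ∑ i, d i c = 0 := by
    rw [← Finset.sum_apply, ZMod.sum_add_one_sub_eq_zero p, Pi.zero_apply]
  have hturn (c : Fin 3) (i : ZMod 4) : 0 ≤ d i c * d (i + 1) c := by
    have hback : p (i + 1 - 1) - p (i + 1) = -d i := by rw [add_sub_cancel_right, neg_sub]
    have h : 0 ≤ d (i + 1) ⬝ᵥ d i := by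
      have h := not_lt.mp (hnot (i + 1))
      rw [hback] at h
      change d (i + 1) ⬝ᵥ -d i ≤ 0 at h
      rwa [dotProduct_neg, neg_nonpos] at h
    rw [mul_comm]
    exact mul_apply_nonneg_of_dotProduct_nonneg (fun _ hj _ hk => (hone (i + 1)).unique hj hk) h c
  have hdisj (c : Fin 3) := ZMod.mul_add_one_eq_zero_of_sum_eq_zero (hturn c) (hclosed c)
  exact fun i =>
    ⟨funext fun c => ZMod.add_two_eq_neg_of_mul_add_one_eq_zero (hdisj c) (hclosed c) i,
      Finset.sum_eq_zero fun c _ => hdisj c i⟩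
end

section
/- Let α and β be types, let r : α → α → Prop be a relation with no directed cycle (for every x : α, not Relation.TransGen r x x), let π : β → α be a map, and let u w : β with u ≠ w and π u = π w. Let r' : β → β → Prop be a relation such that for all a b : β, if r' a b then either (a = u and b = w) or r (π a) (π b). Then r' has no directed cycle: for every b : β, it is not the case that Relation.TransGen r' b b. -/
/-! Contracting the new edge `u → w` maps every edge of `r'` to an edge of `r` or to a loop, so
any cycle of `r'` containing a genuine edge of `r'` projects to a cycle of `r`. A cycle made of
new edges only is impossible: the new edge can be followed only by an edge leaving `w ≠ u`. -/

open Relation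

theorem Relation.transGen_self_of_edge_of_reflTransGen {α β : Type*} {r : α → α → Prop}
    {r' : β → β → Prop} {π : β → α}
    (hlift : ∀ a b, r' a b → ReflGen r (π a) (π b)) {x y : β}
    (hxy : r (π x) (π y)) (hyx : ReflTransGen r' y x) : TransGen r (π x) (π x) :=
  .head' hxy (hyx.lift' π fun a b h => (hlift a b h).to_reflTransGen)

/-- Splitting a vertex of an acyclic directed graph cannot create a cycle: if
`r` on `α` has no directed cycle, `π : β → α` identifies `u ≠ w` with the same
image, and every edge of `r'` is either the new edge `(u, w)` or projects to an
edge of `r`, then `r'` has no directed cycle. -/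
theorem no_cycle_after_vertex_split
    {α β : Type*} (r : α → α → Prop) (r' : β → β → Prop)
    (π : β → α) (u w : β)
    (huw : u ≠ w) (hπ : π u = π w)
    (hacyc : ∀ x : α, ¬ Relation.TransGen r x x)
    (hedge : ∀ a b : β, r' a b → (a = u ∧ b = w) ∨ r (π a) (π b)) :
    ∀ b : β, ¬ Relation.TransGen r' b b := by
  have hlift : ∀ a b, r' a b → ReflGen r (π a) (π b) := fun a b h => by
    rcases hedge a b h with ⟨rfl, rfl⟩ | h
    · exact hπ ▸ .refl
    · exact .single h
  intro b hb
  obtain ⟨c, hbc, hcb⟩ := TransGen.head'_iff.mp hb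
  rcases hedge b c hbc with ⟨rfl, rfl⟩ | hr
  · rcases hcb.cases_head with hwu | ⟨d, hwd, hdu⟩
    · exact huw hwu.symm
    rcases hedge _ d hwd with ⟨hwu, -⟩ | hr
    · exact huw hwu.symm
    · exact hacyc _ (transGen_self_of_edge_of_reflTransGen hlift hr (hdu.tail hbc))
  · exact hacyc _ (transGen_self_of_edge_of_reflTransGen hlift hr hcb)
end

section
/- Consider lists over the type D = Fin 3 × Bool (the six signed axis directions, where the first component is the axis and the second is the sign) satisfying: (i) the list has length exactly 6, (ii) the list has no duplicate entries (so all six directions occur), and (iii) any two cyclically adjacent entries (including the last and the first) have distinct first components (distinct axes). Then the number of equivalence classes of such lists under cyclic rotation (List.IsRotated) is exactly 32. -/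
/-- A complex polycube corner configuration: a list over the six signed axis
directions `Fin 3 × Bool` of length exactly 6, without duplicate entries, in
which any two cyclically adjacent entries have distinct axes (distinct first
components). -/
def IsComplexPolycubeCorner (l : List (Fin 3 × Bool)) : Prop :=
  l.length = 6 ∧ l.Nodup ∧
    ∀ l' : List (Fin 3 × Bool), l.IsRotated l' →
      l'.Chain' (fun a b => a.1 ≠ b.1)

/-! Every configuration uses all six directions exactly once, so each rotation class contains
exactly one list beginning with `(0, false)`: rotating that direction to the front gives one, and
two such lists that are rotations of each other coincide because their entries are distinct.
Counting those lists is a finite check over the orderings of the six directions. -/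

namespace List

variable {α : Type*}

theorem IsRotated.eq_of_nodup_of_head?_eq {l₁ l₂ : List α} {a : α} (h : l₁ ~r l₂)
    (hl₁ : l₁.Nodup) (h₁ : l₁.head? = some a) (h₂ : l₂.head? = some a) : l₁ = l₂ := by
  obtain ⟨n, -, rfl⟩ := isRotated_iff_mod.1 h
  have hne : l₁ ≠ [] := by rintro rfl; simp at h₁
  have hlt : n % l₁.length < l₁.length := Nat.mod_lt _ (length_pos_of_ne_nil hne)
  rw [← rotate_mod, head?_rotate hlt, ← h₁, head?_eq_getElem?] at h₂
  rw [← rotate_mod, (getElem?_inj hlt hl₁).1 h₂, rotate_zero]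

theorem head?_rotate_idxOf [DecidableEq α] {l : List α} {a : α} (h : a ∈ l) :
    (l.rotate (l.idxOf a)).head? = some a := by
  rw [head?_rotate (idxOf_lt_length_of_mem h), getElem?_idxOf h]

theorem Nodup.coe_eq_univ [Fintype α] {l : List α} (hl : l.Nodup)
    (hlen : l.length = Fintype.card α) : (l : Multiset α) = Finset.univ.val :=
  congrArg Finset.val <|
    Finset.eq_univ_of_card (⟨l, Multiset.coe_nodup.2 hl⟩ : Finset α) hlen

def quotientIsRotatedEquivHeadEq [DecidableEq α] {P : List α → Prop} (a : α)
    (hP : ∀ ⦃l l'⦄, l ~r l' → P l → P l') (hnodup : ∀ l, P l → l.Nodup)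
    (hmem : ∀ l, P l → a ∈ l) :
    Quotient ((IsRotated.setoid α).comap (Subtype.val : {l // P l} → List α)) ≃
      {l // P l ∧ l.head? = some a} where
  toFun := Quotient.lift
    (fun l => ⟨l.1.rotate (l.1.idxOf a), hP ⟨_, rfl⟩ l.2, head?_rotate_idxOf (hmem _ l.2)⟩)
    (fun l₁ l₂ h => Subtype.ext <|
      (IsRotated.symm ⟨_, rfl⟩ |>.trans h |>.trans ⟨_, rfl⟩).eq_of_nodup_of_head?_eq
        (nodup_rotate.2 (hnodup _ l₁.2)) (head?_rotate_idxOf (hmem _ l₁.2))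
        (head?_rotate_idxOf (hmem _ l₂.2)))
  invFun l := ⟦⟨l.1, l.2.1⟩⟧
  left_inv := Quotient.ind fun _ => Quotient.sound (IsRotated.symm ⟨_, rfl⟩)
  right_inv l := Subtype.ext <|
    (IsRotated.symm ⟨_, rfl⟩).eq_of_nodup_of_head?_eq
      (nodup_rotate.2 (hnodup _ l.2.1)) (head?_rotate_idxOf (hmem _ l.2.1)) l.2.2

end List

namespace IsComplexPolycubeCorner

variable {l : List (Fin 3 × Bool)}

theorem of_isRotated {l' : List (Fin 3 × Bool)} (h : l ~r l') (hl : IsComplexPolycubeCorner l) :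
    IsComplexPolycubeCorner l' :=
  ⟨h.perm.length_eq ▸ hl.1, h.nodup_iff.1 hl.2.1, fun _ h' => hl.2.2 _ (h.trans h')⟩

theorem nodup (hl : IsComplexPolycubeCorner l) : l.Nodup := hl.2.1

theorem coe_eq_univ (hl : IsComplexPolycubeCorner l) :
    (l : Multiset (Fin 3 × Bool)) = Finset.univ.val :=
  hl.nodup.coe_eq_univ hl.1

theorem mem (hl : IsComplexPolycubeCorner l) (a : Fin 3 × Bool) : a ∈ l := by
  rw [← Multiset.mem_coe, hl.coe_eq_univ]
  exact Finset.mem_univ a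

end IsComplexPolycubeCorner

theorem isComplexPolycubeCorner_iff_cyclicPermutations (l : List (Fin 3 × Bool)) :
    IsComplexPolycubeCorner l ↔ l.length = 6 ∧ l.Nodup ∧
      ∀ l' ∈ l.cyclicPermutations, l'.IsChain (fun a b => a.1 ≠ b.1) := by
  simp only [List.mem_cyclicPermutations_iff]
  exact and_congr_right' <| and_congr_right' <|
    forall_congr' fun _ => imp_congr_left List.isRotated_comm

instance : DecidablePred IsComplexPolycubeCorner := fun l =>
  decidable_of_iff _ (isComplexPolycubeCorner_iff_cyclicPermutations l).symm

theorem card_isComplexPolycubeCorner_head?_eq :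
    Nat.card {l // IsComplexPolycubeCorner l ∧ l.head? = some (0, false)} = 32 := by
  let L : List (Fin 3 × Bool) := List.finRange 3 ×ˢ [false, true]
  have hL : (L : Multiset (Fin 3 × Bool)) = Finset.univ.val :=
    List.Nodup.coe_eq_univ (by decide) rfl
  let F := L.permutations'.filter fun l => l.head? = some (0, false) ∧ IsComplexPolycubeCorner l
  have hF : F.Nodup := ((List.permutations_perm_permutations' L).nodup_iff.1
    (List.nodup_permutations L (by decide))).filter _
  have hS : ∀ l, IsComplexPolycubeCorner l ∧ l.head? = some (0, false) ↔ l ∈ F := fun l => by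
    simp only [F, List.mem_filter, List.mem_permutations', decide_eq_true_eq]
    rw [← Multiset.coe_eq_coe, hL]
    exact ⟨fun h => ⟨h.1.coe_eq_univ, h.2, h.1⟩, fun h => ⟨h.2.2, h.2.1⟩⟩
  rw [Nat.card_congr (Equiv.subtypeEquivRight fun l => (hS l).trans List.mem_toFinset.symm),
    Nat.card_eq_finsetCard, List.toFinset_card_of_nodup hF]
  decide

/-- There are exactly 32 complex polycube corner configurations (with exactly
6 incident edges) up to cyclic rotation. -/
theorem card_complex_polycube_corners_eq_32 :
    Nat.card (Quotient (Setoid.comap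
      (fun l : {l : List (Fin 3 × Bool) // IsComplexPolycubeCorner l} => l.val)
      (List.IsRotated.setoid (Fin 3 × Bool)))) = 32 :=
  (Nat.card_congr (List.quotientIsRotatedEquivHeadEq (0, false)
    (fun _ _ => IsComplexPolycubeCorner.of_isRotated) (fun _ => IsComplexPolycubeCorner.nodup)
    (fun _ hl => hl.mem _))).trans card_isComplexPolycubeCorner_head?_eq
end
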